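/- arXiv:1705.08527 — 5 statements merged into one kernel-verified Lean document; each statement's English description precedes it below -/
import Mathlib

section
/- Let U_1,…,U_n be real random variables on a common probability space with E[U_i] = 0 and |U_i| ≤ M almost surely for every i, and let D_1,…,D_n ⊆ {1,…,n} be sets satisfying i ∈ D_i and the symmetry condition j ∈ D_i if and only if i ∈ D_j. Assume that for all indices i, j, k, l with j ∈ D_i and l ∈ D_k, if (D_i ∪ D_j) ∩ {k, l} = ∅ then Cov(U_i U_j, U_k U_l) = 0. Then Var( Σ_{i=1}^n Σ_{j∈D_i} U_i U_j ) ≤ 4 M⁴ Σ_{i=1}^n Σ_{j∈D_i} Σ_{k∈D_i∪D_j} |D_k|. -/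
open MeasureTheory ProbabilityTheory Filter

/-- The covariance of two real random variables. -/
noncomputable def covar {Ω : Type*} [MeasurableSpace Ω] (μ : Measure Ω)
    (f g : Ω → ℝ) : ℝ :=
  ∫ ω, (f ω - ∫ ω', f ω' ∂μ) * (g ω - ∫ ω', g ω' ∂μ) ∂μ

open Finset

/-!
The variance of the sum of the products `U i * U j` over the pairs `j ∈ D i` is the double sum of
their pairwise covariances. Each such covariance is at most `2 M⁴`, and it vanishes unless `k` or
`l` lies in `D i ∪ D j`; by the symmetry of `D` there are at most `2 ∑_{k ∈ D i ∪ D j} |D k|`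
such pairs `(k, l)`.
-/

section Covariance

variable {Ω : Type*} [MeasurableSpace Ω] {μ : Measure Ω}

lemma covar_eq_covariance (f g : Ω → ℝ) : covar μ f g = cov[f, g; μ] := rfl

lemma abs_integral_le_of_abs_le [IsProbabilityMeasure μ] {f : Ω → ℝ} {C : ℝ}
    (hf : ∀ᵐ ω ∂μ, |f ω| ≤ C) : |∫ ω, f ω ∂μ| ≤ C := by
  simpa using norm_integral_le_of_norm_le_const (μ := μ) (f := f) (C := C) hf

lemma abs_covariance_le_of_abs_le [IsProbabilityMeasure μ] {X Y : Ω → ℝ} {C : ℝ}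
    (hXm : AEStronglyMeasurable X μ) (hYm : AEStronglyMeasurable Y μ)
    (hX : ∀ᵐ ω ∂μ, |X ω| ≤ C) (hY : ∀ᵐ ω ∂μ, |Y ω| ≤ C) :
    |cov[X, Y; μ]| ≤ 2 * C ^ 2 := by
  have hC : 0 ≤ C := let ⟨_, hω⟩ := hX.exists; (abs_nonneg _).trans hω
  have hXY : ∀ᵐ ω ∂μ, |(X * Y) ω| ≤ C ^ 2 := by
    filter_upwards [hX, hY] with ω h1 h2
    rw [Pi.mul_apply, abs_mul, sq]
    exact mul_le_mul h1 h2 (abs_nonneg _) hC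
  rw [covariance_eq_sub (MemLp.of_bound hXm C hX) (MemLp.of_bound hYm C hY)]
  calc |μ[X * Y] - μ[X] * μ[Y]| ≤ |μ[X * Y]| + |μ[X]| * |μ[Y]| := by
        rw [← abs_mul]; exact abs_sub _ _
    _ ≤ C ^ 2 + C * C := by
        gcongr
        · exact abs_integral_le_of_abs_le hXY
        · exact abs_integral_le_of_abs_le hX
        · exact abs_integral_le_of_abs_le hY
    _ = 2 * C ^ 2 := by ring

lemma variance_fun_sum_le_of_covariance_eq_zero [IsFiniteMeasure μ] {κ : Type*} (s : Finset κ)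
    {X : κ → Ω → ℝ} (hX : ∀ p ∈ s, MemLp (X p) 2 μ) (R : κ → κ → Prop) [DecidableRel R]
    {B : ℝ} (hB : ∀ p ∈ s, ∀ q ∈ s, R p q → cov[X p, X q; μ] ≤ B)
    (hR : ∀ p ∈ s, ∀ q ∈ s, ¬ R p q → cov[X p, X q; μ] = 0) :
    Var[fun ω => ∑ p ∈ s, X p ω; μ] ≤ B * ∑ p ∈ s, (#{q ∈ s | R p q} : ℝ) := by
  rw [variance_fun_sum' hX, mul_sum]
  refine sum_le_sum fun p hp => ?_
  rw [← sum_filter_of_ne fun q hq hne => by_contra fun h => hne (hR p hp q hq h)]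
  calc ∑ q ∈ s with R p q, cov[X p, X q; μ] ≤ #{q ∈ s | R p q} • B :=
        sum_le_card_nsmul _ _ _ fun q hq => hB p hp q (mem_filter.1 hq).1 (mem_filter.1 hq).2
    _ = B * #{q ∈ s | R p q} := by rw [nsmul_eq_mul, mul_comm]

end Covariance

lemma card_filter_sigma_le_of_symm {ι : Type*} [Fintype ι] [DecidableEq ι] (D : ι → Finset ι)
    (hsym : ∀ i j, j ∈ D i ↔ i ∈ D j) (A : Finset ι) :
    #{x ∈ univ.sigma D | x.1 ∈ A ∨ x.2 ∈ A} ≤ 2 * ∑ k ∈ A, #(D k) := by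
  let swap : (Σ _ : ι, ι) → (Σ _ : ι, ι) := fun x => ⟨x.2, x.1⟩
  have hsub : {x ∈ univ.sigma D | x.1 ∈ A ∨ x.2 ∈ A} ⊆ A.sigma D ∪ (A.sigma D).image swap := by
    rintro ⟨i, j⟩ hx
    simp only [mem_filter, mem_sigma, mem_univ, true_and] at hx
    rcases hx with ⟨hij, hi | hj⟩
    · exact mem_union_left _ (mem_sigma.2 ⟨hi, hij⟩)
    · exact mem_union_right _ (mem_image.2 ⟨⟨j, i⟩, mem_sigma.2 ⟨hj, (hsym i j).1 hij⟩, rfl⟩)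
  calc _ ≤ #(A.sigma D ∪ (A.sigma D).image swap) := card_le_card hsub
    _ ≤ #(A.sigma D) + #(A.sigma D) :=
        (card_union_le _ _).trans (Nat.add_le_add_left card_image_le _)
    _ = 2 * ∑ k ∈ A, #(D k) := by rw [card_sigma]; ring

theorem stmt_4_general {Ω : Type} [MeasurableSpace Ω] (μ : Measure Ω) [IsProbabilityMeasure μ]
    {n : ℕ} (U : Fin n → Ω → ℝ) (D : Fin n → Finset (Fin n))
    (M : ℝ)
    (hmeas : ∀ i, Measurable (U i))
    (hbdd : ∀ i, ∀ᵐ ω ∂μ, |U i ω| ≤ M)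
    (hsym : ∀ i j, j ∈ D i ↔ i ∈ D j)
    (hcov : ∀ i j k l : Fin n, j ∈ D i → l ∈ D k →
      Disjoint (D i ∪ D j) ({k, l} : Finset (Fin n)) →
      covar μ (fun ω => U i ω * U j ω) (fun ω => U k ω * U l ω) = 0) :
    variance (fun ω => ∑ i, ∑ j ∈ D i, U i ω * U j ω) μ ≤
      4 * M ^ 4 * ∑ i, ∑ j ∈ D i, ∑ k ∈ D i ∪ D j, ((D k).card : ℝ) := by
  classical
  set s := univ.sigma D
  set X : (Σ _ : Fin n, Fin n) → Ω → ℝ := fun x ω => U x.1 ω * U x.2 ω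
  have hXm : ∀ x, AEStronglyMeasurable (X x) μ :=
    fun x => ((hmeas _).mul (hmeas _)).aestronglyMeasurable
  have hXbdd : ∀ x, ∀ᵐ ω ∂μ, |X x ω| ≤ M ^ 2 := fun x => by
    filter_upwards [hbdd x.1, hbdd x.2] with ω h1 h2
    rw [abs_mul, sq]
    exact mul_le_mul h1 h2 (abs_nonneg _) ((abs_nonneg _).trans h1)
  have hcov_le : ∀ p q, cov[X p, X q; μ] ≤ 2 * M ^ 4 := fun p q =>
    (le_abs_self _).trans <| (abs_covariance_le_of_abs_le (hXm p) (hXm q) (hXbdd p)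
      (hXbdd q)).trans_eq (by ring)
  have hcov_eq_zero : ∀ p ∈ s, ∀ q ∈ s, ¬ (q.1 ∈ D p.1 ∪ D p.2 ∨ q.2 ∈ D p.1 ∪ D p.2) →
      cov[X p, X q; μ] = 0 := fun p hp q hq hpq => by
    rw [← covar_eq_covariance]
    exact hcov _ _ _ _ (mem_sigma.1 hp).2 (mem_sigma.1 hq).2 <| by
      simpa [disjoint_insert_right, not_or] using hpq
  have hsum : (fun ω => ∑ i, ∑ j ∈ D i, U i ω * U j ω) = fun ω => ∑ x ∈ s, X x ω :=
    funext fun ω => (sum_sigma univ D fun x => X x ω).symm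
  calc variance (fun ω => ∑ i, ∑ j ∈ D i, U i ω * U j ω) μ
      ≤ 2 * M ^ 4 * ∑ p ∈ s,
          (#{q ∈ s | q.1 ∈ D p.1 ∪ D p.2 ∨ q.2 ∈ D p.1 ∪ D p.2} : ℝ) := by
        rw [hsum]
        exact variance_fun_sum_le_of_covariance_eq_zero s
          (fun p _ => MemLp.of_bound (hXm p) _ (hXbdd p)) _
          (fun p _ q _ _ => hcov_le p q) hcov_eq_zero
    _ ≤ 2 * M ^ 4 * ∑ p ∈ s, 2 * ∑ k ∈ D p.1 ∪ D p.2, ((D k).card : ℝ) := by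
        gcongr with p
        exact_mod_cast card_filter_sigma_le_of_symm D hsym _
    _ = 4 * M ^ 4 * ∑ i, ∑ j ∈ D i, ∑ k ∈ D i ∪ D j, ((D k).card : ℝ) := by
        rw [← mul_sum, sum_sigma]; ring

theorem stmt_4 {Ω : Type} [MeasurableSpace Ω] (μ : Measure Ω) [IsProbabilityMeasure μ]
    {n : ℕ} (U : Fin n → Ω → ℝ) (D : Fin n → Finset (Fin n))
    (M : ℝ)
    (hmeas : ∀ i, Measurable (U i))
    (hmean : ∀ i, ∫ ω, U i ω ∂μ = 0)
    (hbdd : ∀ i, ∀ᵐ ω ∂μ, |U i ω| ≤ M)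
    (hmem : ∀ i, i ∈ D i)
    (hsym : ∀ i j, j ∈ D i ↔ i ∈ D j)
    (hcov : ∀ i j k l : Fin n, j ∈ D i → l ∈ D k →
      Disjoint (D i ∪ D j) ({k, l} : Finset (Fin n)) →
      covar μ (fun ω => U i ω * U j ω) (fun ω => U k ω * U l ω) = 0) :
    variance (fun ω => ∑ i, ∑ j ∈ D i, U i ω * U j ω) μ ≤
      4 * M ^ 4 * ∑ i, ∑ j ∈ D i, ∑ k ∈ D i ∪ D j, ((D k).card : ℝ) :=
  stmt_4_general μ U D M hmeas hbdd hsym hcov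
end

section
/- Let (Ω, ℱ, μ) be a probability space, let S be a standard Borel space, let C : Ω → S be measurable, let Z_n : Ω → ℝ be a sequence of random variables, and let g_n : S → ℝ be measurable functions with W_n := g_n ∘ C. Suppose that (i) for every x₁ ∈ ℝ, for (μ ∘ C⁻¹)-almost every c ∈ S, P(Z_n ≤ x₁ | C = c) → Φ(x₁) as n → ∞, and (ii) for every x₂ ∈ ℝ, μ{W_n ≤ x₂} → Φ(x₂) as n → ∞. Then for every (x₁, x₂) ∈ ℝ², μ{Z_n ≤ x₁ and W_n ≤ x₂} → Φ(x₁)·Φ(x₂) as n → ∞; that is, (Z_n, W_n) converges in distribution to a pair of independent standard normal random variables. -/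
open MeasureTheory ProbabilityTheory Filter

/-- The cumulative distribution function of the standard normal distribution. -/
noncomputable def stdNormalCDF (x : ℝ) : ℝ :=
  ((gaussianReal 0 1) (Set.Iic x)).toReal

/-!
Disintegrating `μ` along `C`, the joint probability `μ {Z n ≤ x₁, g n ∘ C ≤ x₂}` is the integral,
over `{g n ≤ x₂}` and against the law of `C`, of the conditional distribution function
`c ↦ P(Z n ≤ x₁ | C = c)`. These functions are bounded by `1` and converge a.e. to `Φ x₁`, so by
dominated convergence they converge to `Φ x₁` in `L¹`; an `L¹` bound controls the integrals over
all sets at once, whence the joint probability is `Φ x₁ * μ {g n ∘ C ≤ x₂} + o(1)`.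
-/

open Set Topology

namespace MeasureTheory

variable {α E : Type*} [MeasurableSpace α] {μ : Measure α} [NormedAddCommGroup E]

theorem ae_norm_le_of_tendsto_of_ae_norm_le {F : ℕ → α → E} {f : α → E} {bound : α → ℝ}
    (h_bound : ∀ n, ∀ᵐ a ∂μ, ‖F n a‖ ≤ bound a)
    (h_lim : ∀ᵐ a ∂μ, Tendsto (fun n ↦ F n a) atTop (𝓝 (f a))) :
    ∀ᵐ a ∂μ, ‖f a‖ ≤ bound a := by
  filter_upwards [h_lim, ae_all_iff.2 h_bound] with a ha hb
  exact le_of_tendsto' ha.norm hb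

theorem tendsto_integral_norm_sub_of_dominated_convergence {F : ℕ → α → E} {f : α → E}
    (bound : α → ℝ) (hF_meas : ∀ n, AEStronglyMeasurable (F n) μ)
    (h_bound : ∀ n, ∀ᵐ a ∂μ, ‖F n a‖ ≤ bound a) (bound_integrable : Integrable bound μ)
    (h_lim : ∀ᵐ a ∂μ, Tendsto (fun n ↦ F n a) atTop (𝓝 (f a))) :
    Tendsto (fun n ↦ ∫ a, ‖F n a - f a‖ ∂μ) atTop (𝓝 0) := by
  have hf_meas : AEStronglyMeasurable f μ := aestronglyMeasurable_of_tendsto_ae _ hF_meas h_lim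
  have h := tendsto_integral_of_dominated_convergence (fun a ↦ 2 * bound a)
    (fun n ↦ ((hF_meas n).sub hf_meas).norm) (bound_integrable.const_mul 2)
    (fun n ↦ by
      filter_upwards [h_bound n, ae_norm_le_of_tendsto_of_ae_norm_le h_bound h_lim]
        with a hFa hfa
      rw [norm_norm, Pi.sub_apply]
      linarith [norm_sub_le (F n a) (f a)])
    (h_lim.mono fun a ha ↦ by simpa using (tendsto_iff_norm_sub_tendsto_zero.1 ha))
  simpa using h

theorem tendsto_setIntegral_sub_setIntegral_of_dominated_convergence
    [NormedSpace ℝ E] [CompleteSpace E] {F : ℕ → α → E}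
    {f : α → E} (bound : α → ℝ) (B : ℕ → Set α)
    (hF_meas : ∀ n, AEStronglyMeasurable (F n) μ)
    (h_bound : ∀ n, ∀ᵐ a ∂μ, ‖F n a‖ ≤ bound a) (bound_integrable : Integrable bound μ)
    (h_lim : ∀ᵐ a ∂μ, Tendsto (fun n ↦ F n a) atTop (𝓝 (f a))) :
    Tendsto (fun n ↦ ∫ a in B n, F n a ∂μ - ∫ a in B n, f a ∂μ) atTop (𝓝 0) := by
  have hF_int n : Integrable (F n) μ := bound_integrable.mono' (hF_meas n) (h_bound n)
  have hf_int : Integrable f μ := bound_integrable.mono'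
    (aestronglyMeasurable_of_tendsto_ae _ hF_meas h_lim)
    (ae_norm_le_of_tendsto_of_ae_norm_le h_bound h_lim)
  refine squeeze_zero_norm (fun n ↦ ?_)
    (tendsto_integral_norm_sub_of_dominated_convergence bound hF_meas h_bound
      bound_integrable h_lim)
  calc ‖∫ a in B n, F n a ∂μ - ∫ a in B n, f a ∂μ‖
      = ‖∫ a in B n, (F n a - f a) ∂μ‖ := by
        rw [integral_sub (hF_int n).integrableOn hf_int.integrableOn]
    _ ≤ ∫ a in B n, ‖F n a - f a‖ ∂μ := norm_integral_le_integral_norm _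
    _ ≤ ∫ a, ‖F n a - f a‖ ∂μ :=
        setIntegral_le_integral ((hF_int n).sub hf_int).norm
          (Eventually.of_forall fun _ ↦ norm_nonneg _)

end MeasureTheory

namespace ProbabilityTheory

variable {α β Ω : Type*} [MeasurableSpace α] [MeasurableSpace β] [MeasurableSpace Ω]
  [StandardBorelSpace Ω] [Nonempty Ω] {μ : Measure α} [IsFiniteMeasure μ]
  {X : α → β} {Y : α → Ω} {s : Set Ω} {t : Set β}

theorem measureReal_preimage_inter_eq_setIntegral_condDistrib (hX : Measurable X)
    (hY : AEMeasurable Y μ) (hs : MeasurableSet s) (ht : MeasurableSet t) :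
    μ.real (X ⁻¹' t ∩ Y ⁻¹' s) = ∫ b in t, (condDistrib Y X μ b).real s ∂(μ.map X) := by
  have hκ : Measurable fun b ↦ condDistrib Y X μ b s := Kernel.measurable_coe _ hs
  simp only [measureReal_def]
  rw [integral_toReal hκ.aemeasurable (Eventually.of_forall fun _ ↦ measure_lt_top _ _),
    Measure.restrict_map hX ht, lintegral_map hκ hX,
    setLIntegral_preimage_condDistrib hX hY hs ht]

end ProbabilityTheory

theorem stmt_8_general {Ω S : Type} [MeasurableSpace Ω]
    [MeasurableSpace S]
    (μ : Measure Ω) [IsProbabilityMeasure μ]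
    (C : Ω → S) (hC : Measurable C)
    (Z : ℕ → Ω → ℝ) (hZ : ∀ n, Measurable (Z n))
    (g : ℕ → S → ℝ) (hg : ∀ n, Measurable (g n))
    (hcond : ∀ x₁ : ℝ, ∀ᵐ c ∂(μ.map C),
      Tendsto (fun n => ((condDistrib (Z n) C μ) c (Set.Iic x₁)).toReal) atTop
        (nhds (stdNormalCDF x₁)))
    (hW : ∀ x₂ : ℝ, Tendsto (fun n => (μ {ω | g n (C ω) ≤ x₂}).toReal) atTop
        (nhds (stdNormalCDF x₂))) :
    ∀ x₁ x₂ : ℝ, Tendsto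
      (fun n => (μ {ω | Z n ω ≤ x₁ ∧ g n (C ω) ≤ x₂}).toReal) atTop
      (nhds (stdNormalCDF x₁ * stdNormalCDF x₂)) := by
  intro x₁ x₂
  have hB n : MeasurableSet (g n ⁻¹' Iic x₂) := hg n measurableSet_Iic
  have h_joint n : (μ {ω | Z n ω ≤ x₁ ∧ g n (C ω) ≤ x₂}).toReal =
      ∫ c in g n ⁻¹' Iic x₂, (condDistrib (Z n) C μ c (Iic x₁)).toReal ∂(μ.map C) := by
    refine Eq.trans ?_ (measureReal_preimage_inter_eq_setIntegral_condDistrib hC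
      (hZ n).aemeasurable measurableSet_Iic (hB n))
    rw [measureReal_def]
    congr with ω
    exact and_comm
  have h_marg n : (μ {ω | g n (C ω) ≤ x₂}).toReal = (μ.map C).real (g n ⁻¹' Iic x₂) := by
    rw [map_measureReal_apply hC (hB n)]; rfl
  have h_err := tendsto_setIntegral_sub_setIntegral_of_dominated_convergence (μ := μ.map C)
    (fun _ ↦ 1) (fun n ↦ g n ⁻¹' Iic x₂)
    (fun n ↦ (Kernel.measurable_coe _ measurableSet_Iic).ennreal_toReal.aestronglyMeasurable)
    (fun n ↦ Eventually.of_forall fun c ↦ by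
      rw [Real.norm_eq_abs, abs_of_nonneg ENNReal.toReal_nonneg]
      exact measureReal_le_one)
    (integrable_const 1) (hcond x₁)
  simp_rw [setIntegral_const, smul_eq_mul, ← h_marg] at h_err
  simpa [h_joint, mul_comm] using h_err.add ((hW x₂).const_mul (stdNormalCDF x₁))

theorem stmt_8 {Ω S : Type} [MeasurableSpace Ω]
    [MeasurableSpace S] [StandardBorelSpace S]
    (μ : Measure Ω) [IsProbabilityMeasure μ]
    (C : Ω → S) (hC : Measurable C)
    (Z : ℕ → Ω → ℝ) (hZ : ∀ n, Measurable (Z n))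
    (g : ℕ → S → ℝ) (hg : ∀ n, Measurable (g n))
    (hcond : ∀ x₁ : ℝ, ∀ᵐ c ∂(μ.map C),
      Tendsto (fun n => ((condDistrib (Z n) C μ) c (Set.Iic x₁)).toReal) atTop
        (nhds (stdNormalCDF x₁)))
    (hW : ∀ x₂ : ℝ, Tendsto (fun n => (μ {ω | g n (C ω) ≤ x₂}).toReal) atTop
        (nhds (stdNormalCDF x₂))) :
    ∀ x₁ x₂ : ℝ, Tendsto
      (fun n => (μ {ω | Z n ω ≤ x₁ ∧ g n (C ω) ≤ x₂}).toReal) atTop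
      (nhds (stdNormalCDF x₁ * stdNormalCDF x₂)) :=
  stmt_8_general μ C hC Z hZ g hg hcond hW
end

section
/- Let (Ω, ℱ, μ) be a probability space, let S be a standard Borel space, let C : Ω → S be measurable, let Z_n : Ω → ℝ be a sequence of random variables, and let g_n : S → ℝ be measurable functions with W_n := g_n ∘ C. Suppose that (i) for every x₁ ∈ ℝ, for (μ ∘ C⁻¹)-almost every c ∈ S, P(Z_n ≤ x₁ | C = c) → Φ(x₁) as n → ∞, and (ii) for every x₂ ∈ ℝ, μ{W_n ≤ x₂} → Φ(x₂) as n → ∞. Then Z_n + W_n converges in distribution to a normal random variable with mean 0 and variance 2; equivalently, for every x ∈ ℝ, μ{Z_n + W_n ≤ x} → Φ(x/√2) as n → ∞. -/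
/-!
Disintegrating along `C`, `P(Z_n + W_n ≤ x) = ∫ F_{n,c}(x - g_n c) dν(c)`, where `ν` is the law
of `C` and `F_{n,c}` is the conditional distribution function of `Z_n` given `C = c`. For
`ν`-a.e. `c`, `F_{n,c} → Φ` at every rational point, hence everywhere, and uniformly by Pólya's
theorem since `Φ` is continuous; by dominated convergence the integral is therefore
asymptotically `∫ Φ(x - g_n c) dν(c)`. This is the distribution function at `x` of the
convolution of the law of `W_n` with `N(0,1)`, i.e. `∫ P(W_n ≤ x - z) dN(0,1)(z)`, which tends by
dominated convergence to `(N(0,1) ∗ N(0,1))(-∞, x] = N(0,2)(-∞, x] = Φ(x/√2)`.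
-/

open MeasureTheory ProbabilityTheory Filter

open Set Topology

namespace ProbabilityTheory

lemma continuous_cdf (μ : Measure ℝ) [IsProbabilityMeasure μ] [NullSingletonClass μ] :
    Continuous (cdf μ) := by
  refine continuous_iff_continuousAt.2 fun a ↦ continuousAt_iff_continuous_left_right.2 ⟨?_, ?_⟩
  · have hatom : (cdf μ).measure {a} = 0 := by rw [measure_cdf]; exact measure_singleton a
    rw [StieltjesFunction.measure_singleton, ENNReal.ofReal_eq_zero, sub_nonpos] at hatom
    rw [← continuousWithinAt_Iio_iff_Iic, (monotone_cdf μ).continuousWithinAt_Iio_iff_leftLim_eq]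
    exact le_antisymm ((monotone_cdf μ).leftLim_le le_rfl) hatom
  · exact (cdf μ).right_continuous a

lemma exists_cdf_eq {μ : Measure ℝ} (hμ : Continuous (cdf μ)) {y : ℝ} (hy : y ∈ Ioo 0 1) :
    ∃ t, cdf μ t = y :=
  mem_range_of_exists_le_of_exists_ge hμ
    (((tendsto_cdf_atBot μ).eventually (eventually_le_nhds hy.1)).exists)
    (((tendsto_cdf_atTop μ).eventually (eventually_ge_nhds hy.2)).exists)

lemma cdf_map {Ω : Type*} [MeasurableSpace Ω] {μ : Measure Ω} [IsProbabilityMeasure μ]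
    {f : Ω → ℝ} (hf : Measurable f) (t : ℝ) : cdf (μ.map f) t = μ.real {ω | f ω ≤ t} := by
  have := Measure.isProbabilityMeasure_map (μ := μ) hf.aemeasurable
  rw [cdf_eq_real, map_measureReal_apply hf measurableSet_Iic]
  rfl

lemma cdf_conv (μ ν : Measure ℝ) [IsProbabilityMeasure μ] [IsProbabilityMeasure ν] (x : ℝ) :
    cdf (μ ∗ ν) x = ∫ z, cdf ν (x - z) ∂μ := by
  have hmeas : Measurable fun z ↦ ν (Iic (x - z)) :=
    Antitone.measurable fun a b hab ↦ measure_mono (Iic_subset_Iic.2 (by linarith))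
  have hlin : (μ ∗ ν) (Iic x) = ∫⁻ z, ν (Iic (x - z)) ∂μ := by
    rw [← lintegral_indicator_one measurableSet_Iic,
      Measure.lintegral_conv (measurable_one.indicator measurableSet_Iic)]
    refine lintegral_congr fun z ↦ ?_
    rw [← lintegral_indicator_one measurableSet_Iic]
    congr 1 with w
    simp only [indicator, mem_Iic, Pi.one_apply, le_sub_iff_add_le']
  simp_rw [cdf_eq_real, measureReal_def, hlin]
  rw [integral_toReal hmeas.aemeasurable (ae_of_all _ fun _ ↦ measure_lt_top _ _)]

lemma cdf_gaussianReal_zero (v : NNReal) (hv : v ≠ 0) (x : ℝ) :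
    cdf (gaussianReal 0 v) x = cdf (gaussianReal 0 1) (x / Real.sqrt v) := by
  have hs : 0 < Real.sqrt v := Real.sqrt_pos.2 (by positivity)
  have hmap : (gaussianReal 0 1).map (Real.sqrt v * ·) = gaussianReal 0 v := by
    rw [gaussianReal_map_const_mul]
    congr 1
    · ring
    · ext; simp
  rw [← hmap, cdf_map (measurable_const_mul _), cdf_eq_real]
  congr 1 with y
  simp [le_div_iff₀ hs, mul_comm]

lemma cdf_gaussianReal_conv_self (x : ℝ) :
    cdf (gaussianReal 0 1 ∗ gaussianReal 0 1) x = cdf (gaussianReal 0 1) (x / Real.sqrt 2) := by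
  rw [gaussianReal_conv_gaussianReal, zero_add, cdf_gaussianReal_zero _ (by norm_num),
    one_add_one_eq_two, NNReal.coe_ofNat]

lemma exists_cdf_quantiles {μ : Measure ℝ} (hμ : Continuous (cdf μ)) (N : ℕ) :
    ∃ q : ℕ → ℝ, ∀ i, 0 < i → i < N → cdf μ (q i) * N = i := by
  have hq : ∀ i : ℕ, ∃ t, 0 < i → i < N → cdf μ t * N = i := fun i ↦ by
    by_cases hi : 0 < i ∧ i < N
    · have hN0 : (0 : ℝ) < N := by exact_mod_cast hi.1.trans hi.2
      obtain ⟨t, ht⟩ := exists_cdf_eq hμ (y := i / N)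
        ⟨by have := hi.1; positivity, by rw [div_lt_one hN0]; exact_mod_cast hi.2⟩
      exact ⟨t, fun _ _ ↦ by rw [ht, div_mul_cancel₀ _ hN0.ne']⟩
    · exact ⟨0, fun h1 h2 ↦ absurd ⟨h1, h2⟩ hi⟩
  choose q hq using hq
  exact ⟨q, hq⟩

lemma exists_finset_cdf_bracket {μ : Measure ℝ} (hμ : Continuous (cdf μ)) {ε : ℝ} (hε : 0 < ε) :
    ∃ T : Finset ℝ, ∀ s, (cdf μ s ≤ ε ∨ ∃ t ∈ T, t ≤ s ∧ cdf μ s ≤ cdf μ t + ε) ∧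
      (1 - ε ≤ cdf μ s ∨ ∃ t ∈ T, s ≤ t ∧ cdf μ t ≤ cdf μ s + ε) := by
  obtain ⟨N, hN⟩ := exists_nat_gt (1 / ε)
  have hNε : 1 < N * ε := (div_lt_iff₀ hε).1 hN
  have hN0 : (0 : ℝ) < N := (one_div_pos.2 hε).trans hN
  obtain ⟨q, hq⟩ := exists_cdf_quantiles hμ N
  have hmem : ∀ i, i < N → q i ∈ (Finset.range N).image q := fun i hi ↦
    Finset.mem_image_of_mem q (Finset.mem_range.2 hi)
  -- quantiles of orders `i / N`, `0 < i < N`, which are `1 / N < ε` apart in probability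
  refine ⟨(Finset.range N).image q, fun s ↦ ⟨?_, ?_⟩⟩
  · rw [or_iff_not_imp_left, not_le]
    intro hs
    have hNs : N * ε < N * cdf μ s := by gcongr
    have hceil := Nat.ceil_lt_add_one (mul_nonneg hN0.le (cdf_nonneg μ s))
    have hle_ceil := Nat.le_ceil (N * cdf μ s)
    have hceil_le : ⌈N * cdf μ s⌉₊ ≤ N :=
      Nat.ceil_le.2 (mul_le_of_le_one_right hN0.le (cdf_le_one μ s))
    have h1 : 1 < ⌈N * cdf μ s⌉₊ := by exact_mod_cast hNε.trans (hNs.trans_le hle_ceil)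
    obtain ⟨i, hi⟩ : ∃ i, ⌈N * cdf μ s⌉₊ = i + 1 := ⟨⌈N * cdf μ s⌉₊ - 1, by omega⟩
    have hi0 : 0 < i := by omega
    have hiN : i < N := by omega
    rw [hi] at hceil hle_ceil
    push_cast at hceil hle_ceil
    have hqi := hq i hi0 hiN
    refine ⟨q i, hmem i hiN, ((monotone_cdf μ).reflect_lt ?_).le, ?_⟩
    · nlinarith
    · nlinarith
  · rw [or_iff_not_imp_left, not_le]
    intro hs
    have hpos := mul_nonneg hN0.le (cdf_nonneg μ s)
    have hfloor := Nat.lt_floor_add_one (N * cdf μ s)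
    have hfloor_le := Nat.floor_le hpos
    have hjN : ⌊N * cdf μ s⌋₊ + 1 < N := by
      have : (⌊N * cdf μ s⌋₊ : ℝ) + 1 < N := by nlinarith
      exact_mod_cast this
    have hqj := hq _ (Nat.succ_pos _) hjN
    push_cast at hqj
    refine ⟨q (⌊N * cdf μ s⌋₊ + 1), hmem _ hjN, ((monotone_cdf μ).reflect_lt ?_).le, ?_⟩
    · nlinarith
    · nlinarith

theorem tendstoUniformly_cdf_of_tendsto {ι : Type*} {l : Filter ι} {μs : ι → Measure ℝ}
    {μ : Measure ℝ} (hμ : Continuous (cdf μ))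
    (h : ∀ t, Tendsto (fun i ↦ cdf (μs i) t) l (𝓝 (cdf μ t))) :
    TendstoUniformly (fun i ↦ cdf (μs i)) (cdf μ) l := by
  rw [Metric.tendstoUniformly_iff]
  intro ε hε
  obtain ⟨T, hT⟩ := exists_finset_cdf_bracket hμ (by positivity : 0 < ε / 3)
  have hev : ∀ᶠ i in l, ∀ t ∈ T, |cdf (μs i) t - cdf μ t| < ε / 3 :=
    (Filter.eventually_all_finset T).2 fun t _ ↦ by
      simpa only [Real.dist_eq] using Metric.tendsto_nhds.1 (h t) _ (by positivity)
  filter_upwards [hev] with i hi s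
  have h0 := cdf_nonneg (μs i) s
  have h1 := cdf_le_one (μs i) s
  rw [Real.dist_eq, abs_sub_lt_iff]
  obtain ⟨hlow, hup⟩ := hT s
  constructor
  · rcases hlow with hs | ⟨t, ht, hts, hst⟩
    · linarith
    · linarith [abs_sub_lt_iff.1 (hi t ht), monotone_cdf (μs i) hts]
  · rcases hup with hs | ⟨t, ht, hst, hts⟩
    · linarith
    · linarith [abs_sub_lt_iff.1 (hi t ht), monotone_cdf (μs i) hst]

lemma tendsto_cdf_of_forall_rat {ι : Type*} {l : Filter ι} {μs : ι → Measure ℝ}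
    {μ : Measure ℝ} {t : ℝ} (hμ : ContinuousAt (cdf μ) t)
    (h : ∀ q : ℚ, Tendsto (fun i ↦ cdf (μs i) q) l (𝓝 (cdf μ q))) :
    Tendsto (fun i ↦ cdf (μs i) t) l (𝓝 (cdf μ t)) := by
  refine tendsto_order.2 ⟨fun a ha ↦ ?_, fun b hb ↦ ?_⟩
  · obtain ⟨u, hut, hu⟩ := exists_Ioc_subset_of_mem_nhds (hμ.eventually (lt_mem_nhds ha))
      (exists_lt t)
    obtain ⟨q, huq, hqt⟩ := exists_rat_btwn hut
    filter_upwards [(h q).eventually (lt_mem_nhds (hu ⟨huq, hqt.le⟩))] with i hi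
    exact hi.trans_le (monotone_cdf _ hqt.le)
  · obtain ⟨u, htu, hu⟩ := exists_Ico_subset_of_mem_nhds (hμ.eventually (gt_mem_nhds hb))
      (exists_gt t)
    obtain ⟨q, htq, hqu⟩ := exists_rat_btwn htu
    filter_upwards [(h q).eventually (gt_mem_nhds (hu ⟨htq.le, hqu⟩))] with i hi
    exact (monotone_cdf _ htq.le).trans_lt hi

lemma Kernel.measurable_measure_Iic_comp {S : Type*} [MeasurableSpace S] (κ : Kernel S ℝ)
    [IsSFiniteKernel κ] {t : S → ℝ} (ht : Measurable t) :
    Measurable fun c ↦ κ c (Iic (t c)) :=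
  κ.measurable_kernel_prodMk_left (measurableSet_le measurable_snd (ht.comp measurable_fst))

lemma measureReal_add_le_eq_integral_cdf_condDistrib {Ω S : Type*} [MeasurableSpace Ω]
    [MeasurableSpace S] {μ : Measure Ω} [IsProbabilityMeasure μ] {X : Ω → ℝ} {C : Ω → S}
    {h : S → ℝ} (hX : Measurable X) (hC : Measurable C) (hh : Measurable h) (x : ℝ) :
    μ.real {ω | X ω + h (C ω) ≤ x} = ∫ c, cdf (condDistrib X C μ c) (x - h c) ∂(μ.map C) := by
  have hs : MeasurableSet {p : S × ℝ | p.2 ≤ x - h p.1} :=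
    measurableSet_le measurable_snd (measurable_const.sub (hh.comp measurable_fst))
  have hdis : μ {ω | X ω + h (C ω) ≤ x} = ∫⁻ c, condDistrib X C μ c (Iic (x - h c)) ∂(μ.map C) :=
    calc μ {ω | X ω + h (C ω) ≤ x} = μ.map (fun ω ↦ (C ω, X ω)) {p | p.2 ≤ x - h p.1} := by
          rw [Measure.map_apply (hC.prodMk hX) hs]
          simp only [le_sub_iff_add_le, preimage_ofPred_eq]
      _ = ((μ.map C) ⊗ₘ condDistrib X C μ) {p | p.2 ≤ x - h p.1} := by
          rw [compProd_map_condDistrib hX.aemeasurable]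
      _ = _ := Measure.compProd_apply hs
  simp_rw [measureReal_def, hdis, cdf_eq_real, measureReal_def]
  exact integral_toReal ((condDistrib X C μ).measurable_measure_Iic_comp
    (measurable_const.sub hh)).aemeasurable (ae_of_all _ fun _ ↦ measure_lt_top _ _) |>.symm

lemma tendsto_integral_cdf_sub_of_ae_tendstoUniformly {S : Type*} [MeasurableSpace S]
    {ν : Measure S} [IsFiniteMeasure ν] {κ : ℕ → Kernel S ℝ} [∀ n, IsMarkovKernel (κ n)]
    {μ : Measure ℝ} {t : ℕ → S → ℝ} (ht : ∀ n, Measurable (t n))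
    (h : ∀ᵐ c ∂ν, TendstoUniformly (fun n ↦ cdf (κ n c)) (cdf μ) atTop) :
    Tendsto (fun n ↦ ∫ c, cdf (κ n c) (t n c) ∂ν - ∫ c, cdf μ (t n c) ∂ν) atTop (𝓝 0) := by
  have hF : ∀ n, Measurable fun c ↦ cdf (κ n c) (t n c) := fun n ↦ by
    simp_rw [cdf_eq_real, measureReal_def]
    exact ((κ n).measurable_measure_Iic_comp (ht n)).ennreal_toReal
  have hG : ∀ n, Measurable fun c ↦ cdf μ (t n c) := fun n ↦
    (monotone_cdf μ).measurable.comp (ht n)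
  have hbound : ∀ (ρ : Measure ℝ) y, ‖cdf ρ y‖ ≤ 1 := fun ρ y ↦ by
    rw [Real.norm_eq_abs, abs_of_nonneg (cdf_nonneg ρ y)]; exact cdf_le_one ρ y
  have hint : ∀ n, Integrable (fun c ↦ cdf (κ n c) (t n c)) ν := fun n ↦
    .of_bound (hF n).aestronglyMeasurable 1 (ae_of_all _ fun c ↦ hbound _ _)
  have hint' : ∀ n, Integrable (fun c ↦ cdf μ (t n c)) ν := fun n ↦
    .of_bound (hG n).aestronglyMeasurable 1 (ae_of_all _ fun c ↦ hbound _ _)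
  simp_rw [← integral_sub (hint _) (hint' _)]
  have hlim : ∀ᵐ c ∂ν, Tendsto (fun n ↦ cdf (κ n c) (t n c) - cdf μ (t n c)) atTop (𝓝 0) := by
    filter_upwards [h] with c hc
    rw [Metric.tendsto_nhds]
    intro ε hε
    filter_upwards [Metric.tendstoUniformly_iff.1 hc ε hε] with n hn
    simpa [Real.dist_eq, abs_sub_comm] using hn (t n c)
  simpa using tendsto_integral_of_dominated_convergence (fun _ ↦ 1)
    (fun n ↦ ((hF n).sub (hG n)).aestronglyMeasurable) (integrable_const 1)
    (fun n ↦ ae_of_all _ fun c ↦ by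
      rw [Real.norm_eq_abs]
      exact abs_sub_le_of_nonneg_of_le (cdf_nonneg _ _) (cdf_le_one _ _) (cdf_nonneg _ _)
        (cdf_le_one _ _)) hlim

lemma tendsto_cdf_conv_of_tendsto {ρs : ℕ → Measure ℝ} {ρ : Measure ℝ} (γ : Measure ℝ)
    [∀ n, IsProbabilityMeasure (ρs n)] [IsProbabilityMeasure ρ] [IsProbabilityMeasure γ]
    (h : ∀ t, Tendsto (fun n ↦ cdf (ρs n) t) atTop (𝓝 (cdf ρ t))) (x : ℝ) :
    Tendsto (fun n ↦ cdf (ρs n ∗ γ) x) atTop (𝓝 (cdf (ρ ∗ γ) x)) := by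
  simp_rw [Measure.conv_comm _ γ, cdf_conv]
  refine tendsto_integral_of_dominated_convergence (fun _ ↦ 1)
    (fun n ↦ ((monotone_cdf _).measurable.comp
      (measurable_const.sub measurable_id)).aestronglyMeasurable)
    (integrable_const 1) (fun n ↦ ae_of_all _ fun z ↦ ?_) (ae_of_all _ fun z ↦ h (x - z))
  rw [Real.norm_eq_abs, abs_of_nonneg (cdf_nonneg _ _)]
  exact cdf_le_one _ _

end ProbabilityTheory

theorem stmt_9_general {Ω S : Type} [MeasurableSpace Ω]
    [MeasurableSpace S]
    (μ : Measure Ω) [IsProbabilityMeasure μ]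
    (C : Ω → S) (hC : Measurable C)
    (Z : ℕ → Ω → ℝ) (hZ : ∀ n, Measurable (Z n))
    (g : ℕ → S → ℝ) (hg : ∀ n, Measurable (g n))
    (hcond : ∀ x₁ : ℝ, ∀ᵐ c ∂(μ.map C),
      Tendsto (fun n => ((condDistrib (Z n) C μ) c (Set.Iic x₁)).toReal) atTop
        (nhds (stdNormalCDF x₁)))
    (hW : ∀ x₂ : ℝ, Tendsto (fun n => (μ {ω | g n (C ω) ≤ x₂}).toReal) atTop
        (nhds (stdNormalCDF x₂))) :
    ∀ x : ℝ, Tendsto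
      (fun n => (μ {ω | Z n ω + g n (C ω) ≤ x}).toReal) atTop
      (nhds (stdNormalCDF (x / Real.sqrt 2))) := by
  intro x
  set ν := μ.map C
  have : IsProbabilityMeasure ν := Measure.isProbabilityMeasure_map hC.aemeasurable
  have : ∀ n, IsProbabilityMeasure (ν.map (g n)) := fun n ↦
    Measure.isProbabilityMeasure_map (hg n).aemeasurable
  set γ := gaussianReal 0 1
  have : NullSingletonClass γ := nullSingletonClass_gaussianReal one_ne_zero
  have hΦ : ∀ t, stdNormalCDF t = cdf γ t := fun t ↦ (cdf_eq_real γ t).symm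
  have hunif : ∀ᵐ c ∂ν, TendstoUniformly (fun n ↦ cdf (condDistrib (Z n) C μ c)) (cdf γ) atTop := by
    filter_upwards [ae_all_iff.2 fun q : ℚ ↦ hcond q] with c hc
    refine tendstoUniformly_cdf_of_tendsto (continuous_cdf γ) fun t ↦
      tendsto_cdf_of_forall_rat (continuous_cdf γ).continuousAt fun q ↦ ?_
    simpa only [cdf_eq_real, measureReal_def, hΦ] using hc q
  have hWcdf : ∀ t, Tendsto (fun n ↦ cdf (ν.map (g n)) t) atTop (𝓝 (cdf γ t)) := fun t ↦ by
    simp_rw [ν, Measure.map_map (hg _) hC, cdf_map ((hg _).comp hC), measureReal_def, ← hΦ]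
    exact hW t
  have hconv : ∀ n, ∫ c, cdf γ (x - g n c) ∂ν = cdf (ν.map (g n) ∗ γ) x := fun n ↦ by
    have hm : Measurable fun z ↦ cdf γ (x - z) :=
      (monotone_cdf γ).measurable.comp (measurable_const.sub measurable_id)
    rw [cdf_conv, integral_map (hg n).aemeasurable hm.aestronglyMeasurable]
  have herr := tendsto_integral_cdf_sub_of_ae_tendstoUniformly (t := fun n c ↦ x - g n c)
    (fun n ↦ measurable_const.sub (hg n)) hunif
  have hmain := tendsto_cdf_conv_of_tendsto γ hWcdf x
  rw [cdf_gaussianReal_conv_self, ← hΦ] at hmain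
  refine (zero_add (stdNormalCDF _) ▸ herr.add hmain).congr fun n ↦ ?_
  rw [← hconv, sub_add_cancel, ← measureReal_def,
    measureReal_add_le_eq_integral_cdf_condDistrib (hZ n) hC (hg n)]

theorem stmt_9 {Ω S : Type} [MeasurableSpace Ω]
    [MeasurableSpace S] [StandardBorelSpace S]
    (μ : Measure Ω) [IsProbabilityMeasure μ]
    (C : Ω → S) (hC : Measurable C)
    (Z : ℕ → Ω → ℝ) (hZ : ∀ n, Measurable (Z n))
    (g : ℕ → S → ℝ) (hg : ∀ n, Measurable (g n))
    (hcond : ∀ x₁ : ℝ, ∀ᵐ c ∂(μ.map C),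
      Tendsto (fun n => ((condDistrib (Z n) C μ) c (Set.Iic x₁)).toReal) atTop
        (nhds (stdNormalCDF x₁)))
    (hW : ∀ x₂ : ℝ, Tendsto (fun n => (μ {ω | g n (C ω) ≤ x₂}).toReal) atTop
        (nhds (stdNormalCDF x₂))) :
    ∀ x : ℝ, Tendsto
      (fun n => (μ {ω | Z n ω + g n (C ω) ≤ x}).toReal) atTop
      (nhds (stdNormalCDF (x / Real.sqrt 2))) :=
  stmt_9_general μ C hC Z hZ g hg hcond hW
end

section
/- Let (Ω, ℱ, μ) be a probability space and 𝒱 a finite set. For i = 1,…,n let V_i, V*_i : Ω → 𝒱 be random variables and Y_i : Ω → ℝ be bounded random variables. Define the probability mass functions h_i(v) = μ(V_i = v) and h*_i(v) = μ(V*_i = v), their averages h̄(v) = (1/n)Σ_{i=1}^n h_i(v) and h̄*(v) = (1/n)Σ_{i=1}^n h*_i(v), and assume positivity: h̄(v) > 0 whenever h̄*(v) > 0. Suppose there is a function m : 𝒱 → ℝ such that for every i, E[Y_i | V_i] = m(V_i) almost surely, and set ψ = (1/n)Σ_{i=1}^n E[m(V*_i)]. Then: (i) for every function w : 𝒱 →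 ℝ, E[ (1/n) Σ_{i=1}^n ( m(V*_i) − ψ + w(V_i)·(Y_i − m(V_i)) ) ] = 0; and (ii) for every function m̃ : 𝒱 → ℝ, E[ (1/n) Σ_{i=1}^n ( m̃(V*_i) − ψ + (h̄*(V_i)/h̄(V_i))·(Y_i − m̃(V_i)) ) ] = 0. That is, the estimating equation based on the influence function is unbiased for ψ if either the outcome regression m or the weight function h̄*/h̄ is correctly specified. -/
/-!
Conditioning on `V i` turns the residual `Y i - m̃ (V i)` into `m (V i) - m̃ (V i)`, so every
term of the estimating function is a function of a single finite-valued variable, and its mean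
is a finite sum against the averaged laws: `∑ m̃ h̄* - ψ + ∑ w (m - m̃) h̄`, where `ψ = ∑ m h̄*`.
This vanishes when `m̃ = m`, and also when `w = h̄* / h̄`, since positivity gives
`(h̄* / h̄) h̄ = h̄*` everywhere.
-/

open MeasureTheory ProbabilityTheory Filter

section EstimatingEquation

variable {Ω 𝒱 : Type*} [MeasurableSpace Ω] {μ : Measure Ω} {n : ℕ}

variable (μ) in
/-- `h̄` of the paper for `X = V`, and `h̄*` for `X = Vstar`. -/
noncomputable def averagePmf (X : Fin n → Ω → 𝒱) (v : 𝒱) : ℝ :=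
  (1 / n : ℝ) * ∑ i, μ.real {ω | X i ω = v}

lemma averagePmf_nonneg (X : Fin n → Ω → 𝒱) (v : 𝒱) : 0 ≤ averagePmf μ X v := by
  unfold averagePmf
  positivity

variable [MeasurableSpace 𝒱] [MeasurableSingletonClass 𝒱] [Fintype 𝒱]

lemma integral_comp_eq_sum_measureReal [IsFiniteMeasure μ] {X : Ω → 𝒱} (hX : Measurable X)
    (f : 𝒱 → ℝ) :
    ∫ ω, f (X ω) ∂μ = ∑ v, f v * μ.real {ω | X ω = v} := by
  rw [← integral_map hX.aemeasurable (measurable_of_countable f).aestronglyMeasurable,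
    integral_fintype .of_finite]
  refine Finset.sum_congr rfl fun v _ => ?_
  rw [map_measureReal_apply hX (measurableSet_singleton v), smul_eq_mul, mul_comm]
  rfl

lemma integrable_comp_of_finite [IsFiniteMeasure μ] {X : Ω → 𝒱} (hX : Measurable X)
    (f : 𝒱 → ℝ) : Integrable (fun ω => f (X ω)) μ :=
  Integrable.of_finite.comp_measurable hX

lemma integrable_comp_mul [IsFiniteMeasure μ] {X : Ω → 𝒱} (hX : Measurable X) {Y : Ω → ℝ}
    (hY : Integrable Y μ) (g : 𝒱 → ℝ) : Integrable (fun ω => g (X ω) * Y ω) μ :=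
  hY.bdd_mul ((measurable_of_countable g).comp hX).aestronglyMeasurable
    (.of_forall fun ω => norm_le_pi_norm g (X ω))

/-- The weight `g (V ω)` is `σ(V)`-measurable and bounded, so it can be pulled out of the
conditional expectation. -/
lemma integral_comp_mul_eq_of_condExp_eq [IsFiniteMeasure μ] {V : Ω → 𝒱} {Y : Ω → ℝ}
    {m : 𝒱 → ℝ} (hV : Measurable V) (hY : Integrable Y μ)
    (hreg : μ[Y | MeasurableSpace.comap V inferInstance] =ᵐ[μ] fun ω => m (V ω)) (g : 𝒱 → ℝ) :
    ∫ ω, g (V ω) * Y ω ∂μ = ∫ ω, g (V ω) * m (V ω) ∂μ := by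
  have hgV : StronglyMeasurable[MeasurableSpace.comap V inferInstance] (fun ω => g (V ω)) :=
    ((measurable_of_countable g).comp (comap_measurable V)).stronglyMeasurable
  calc ∫ ω, g (V ω) * Y ω ∂μ
      = ∫ ω, (μ[(fun ω => g (V ω)) * Y | MeasurableSpace.comap V inferInstance]) ω ∂μ :=
        (integral_condExp hV.comap_le).symm
    _ = ∫ ω, g (V ω) * m (V ω) ∂μ := by
        refine integral_congr_ae ?_
        filter_upwards [condExp_stronglyMeasurable_mul_of_bound hV.comap_le hgV hY _
          (.of_forall fun ω => norm_le_pi_norm g (V ω)), hreg] with ω hpull hω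
        rw [hpull, Pi.mul_apply, hω]

lemma integral_comp_mul_residual_eq [IsFiniteMeasure μ] {V : Ω → 𝒱} {Y : Ω → ℝ} {m : 𝒱 → ℝ}
    (hV : Measurable V) (hY : Integrable Y μ)
    (hreg : μ[Y | MeasurableSpace.comap V inferInstance] =ᵐ[μ] fun ω => m (V ω))
    (g f : 𝒱 → ℝ) :
    ∫ ω, g (V ω) * (Y ω - f (V ω)) ∂μ = ∫ ω, (fun v => g v * (m v - f v)) (V ω) ∂μ := by
  have hgf : Integrable (fun ω => g (V ω) * f (V ω)) μ :=
    integrable_comp_of_finite hV fun v => g v * f v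
  simp only [mul_sub]
  rw [integral_sub (integrable_comp_mul hV hY g) hgf,
    integral_sub (integrable_comp_mul hV (integrable_comp_of_finite hV m) g) hgf,
    integral_comp_mul_eq_of_condExp_eq hV hY hreg]

lemma average_integral_comp_eq_sum_averagePmf [IsFiniteMeasure μ] {X : Fin n → Ω → 𝒱}
    (hX : ∀ i, Measurable (X i)) (f : 𝒱 → ℝ) :
    (1 / n : ℝ) * ∑ i, ∫ ω, f (X i ω) ∂μ = ∑ v, f v * averagePmf μ X v := by
  simp only [integral_comp_eq_sum_measureReal (hX _), averagePmf, Finset.mul_sum]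
  rw [Finset.sum_comm]
  exact Finset.sum_congr rfl fun v _ => Finset.sum_congr rfl fun i _ => by ring

lemma integral_average_estimatingFunction [IsProbabilityMeasure μ] (hn : 0 < n)
    {V Vstar : Fin n → Ω → 𝒱} (hV : ∀ i, Measurable (V i)) (hVstar : ∀ i, Measurable (Vstar i))
    {Y : Fin n → Ω → ℝ} (hY : ∀ i, Integrable (Y i) μ) {m : 𝒱 → ℝ}
    (hreg : ∀ i, μ[Y i | MeasurableSpace.comap (V i) inferInstance] =ᵐ[μ] fun ω => m (V i ω))
    (ψ : ℝ) (mtilde w : 𝒱 → ℝ) :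
    ∫ ω, (1 / n : ℝ) * ∑ i,
        (mtilde (Vstar i ω) - ψ + w (V i ω) * (Y i ω - mtilde (V i ω))) ∂μ
      = ∑ v, mtilde v * averagePmf μ Vstar v - ψ
          + ∑ v, w v * (m v - mtilde v) * averagePmf μ V v := by
  have hcentred (i : Fin n) : Integrable (fun ω => mtilde (Vstar i ω) - ψ) μ :=
    (integrable_comp_of_finite (hVstar i) mtilde).sub (integrable_const ψ)
  have hresidual (i : Fin n) : Integrable (fun ω => w (V i ω) * (Y i ω - mtilde (V i ω))) μ :=
    integrable_comp_mul (hV i) ((hY i).sub (integrable_comp_of_finite (hV i) mtilde)) w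
  have hsummand (i : Fin n) : Integrable
      (fun ω => mtilde (Vstar i ω) - ψ + w (V i ω) * (Y i ω - mtilde (V i ω))) μ :=
    (hcentred i).add (hresidual i)
  have hterm (i : Fin n) :
      ∫ ω, (mtilde (Vstar i ω) - ψ + w (V i ω) * (Y i ω - mtilde (V i ω))) ∂μ
        = ∫ ω, mtilde (Vstar i ω) ∂μ - ψ
          + ∫ ω, (fun v => w v * (m v - mtilde v)) (V i ω) ∂μ := by
    rw [integral_add (hcentred i) (hresidual i),
      integral_sub (integrable_comp_of_finite (hVstar i) mtilde) (integrable_const ψ),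
      integral_const, probReal_univ, one_smul,
      integral_comp_mul_residual_eq (hV i) (hY i) (hreg i)]
  have hn' : (n : ℝ) ≠ 0 := by exact_mod_cast hn.ne'
  rw [integral_const_mul, integral_finsetSum _ fun i _ => hsummand i,
    Finset.sum_congr rfl fun i _ => hterm i, Finset.sum_add_distrib, Finset.sum_sub_distrib,
    mul_add, mul_sub, average_integral_comp_eq_sum_averagePmf hVstar,
    average_integral_comp_eq_sum_averagePmf hV fun v => w v * (m v - mtilde v)]
  simp [field]

end EstimatingEquation

theorem stmt_12 {Ω 𝒱 : Type} [MeasurableSpace Ω]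
    [Fintype 𝒱] [MeasurableSpace 𝒱] [MeasurableSingletonClass 𝒱]
    (μ : Measure Ω) [IsProbabilityMeasure μ]
    (n : ℕ) (hn : 0 < n)
    (V Vstar : Fin n → Ω → 𝒱)
    (hV : ∀ i, Measurable (V i)) (hVstar : ∀ i, Measurable (Vstar i))
    (Y : Fin n → Ω → ℝ) (hYmeas : ∀ i, Measurable (Y i))
    (B : ℝ) (hYbdd : ∀ i ω, |Y i ω| ≤ B)
    (hbar hbarstar : 𝒱 → ℝ)
    (hbar_def : ∀ v, hbar v = (1 / n : ℝ) * ∑ i, (μ {ω | V i ω = v}).toReal)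
    (hbarstar_def : ∀ v, hbarstar v = (1 / n : ℝ) * ∑ i, (μ {ω | Vstar i ω = v}).toReal)
    (hpos : ∀ v, 0 < hbarstar v → 0 < hbar v)
    (m : 𝒱 → ℝ)
    (hreg : ∀ i, μ[Y i | MeasurableSpace.comap (V i) inferInstance]
      =ᵐ[μ] fun ω => m (V i ω))
    (ψ : ℝ) (hψ : ψ = (1 / n : ℝ) * ∑ i, ∫ ω, m (Vstar i ω) ∂μ) :
    (∀ w : 𝒱 → ℝ,
      ∫ ω, (1 / n : ℝ) * ∑ i,
        (m (Vstar i ω) - ψ + w (V i ω) * (Y i ω - m (V i ω))) ∂μ = 0) ∧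
    (∀ mtilde : 𝒱 → ℝ,
      ∫ ω, (1 / n : ℝ) * ∑ i,
        (mtilde (Vstar i ω) - ψ +
          (hbarstar (V i ω) / hbar (V i ω)) * (Y i ω - mtilde (V i ω))) ∂μ = 0) := by
  obtain rfl : hbar = averagePmf μ V := funext hbar_def
  obtain rfl : hbarstar = averagePmf μ Vstar := funext hbarstar_def
  have hY (i : Fin n) : Integrable (Y i) μ :=
    (integrable_const B).mono' (hYmeas i).aestronglyMeasurable (.of_forall (hYbdd i))
  have hψ_sum : ψ = ∑ v, m v * averagePmf μ Vstar v :=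
    hψ.trans (average_integral_comp_eq_sum_averagePmf hVstar m)
  refine ⟨fun w => ?_, fun mtilde => ?_⟩
  · rw [integral_average_estimatingFunction hn hV hVstar hY hreg, hψ_sum]
    simp
  · have hweight (v : 𝒱) : averagePmf μ Vstar v / averagePmf μ V v * (m v - mtilde v)
        * averagePmf μ V v = (m v - mtilde v) * averagePmf μ Vstar v := by
      rw [mul_right_comm, div_mul_cancel_of_imp, mul_comm]
      intro h0
      by_contra hne
      exact (hpos v ((averagePmf_nonneg Vstar v).lt_of_ne' hne)).ne' h0
    have h := integral_average_estimatingFunction hn hV hVstar hY hreg ψ mtilde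
      fun v => averagePmf μ Vstar v / averagePmf μ V v
    beta_reduce at h
    rw [h, hψ_sum]
    simp only [hweight, sub_mul, Finset.sum_sub_distrib]
    ring
end

section
/- Let (Ω, ℱ, μ) be a probability space, let 𝒞, 𝒳, 𝒱 be finite sets and E a measurable space. Let C : Ω → 𝒞 and X : Ω → 𝒳 be random variables, and let ε_1,…,ε_n : Ω → E be identically distributed random variables such that the vector (ε_1,…,ε_n) is independent of the pair (C, X). Let f_Y : 𝒱 × E → ℝ be bounded measurable, let s_1,…,s_n : 𝒞 × 𝒳 → 𝒱 be functions, and fix x* ∈ 𝒳. Define V_i = s_i(C, X), Y_i = f_Y(V_i, ε_i), V*_i = s_i(C, x*), Y*_i = f_Y(V*_i, ε_i), and m(v) = E[f_Y(v, ε_1)]. Then: (i) for every i and every v ∈ 𝒱 with μ(V_i = v) > 0, E[Y_i | V_i = v] = m(v); and (ii) the expected average counterfactual outcome is identified by the observed-data functional: E[ (1/n) Σ_{i=1}^n Y*_i ] = (1/n) Σ_{i=1}^n Σ_{c∈𝒞} m(s_i(c, x*)) · μ(C = c). -/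
open MeasureTheory ProbabilityTheory

/-!
Since `(ε_1, …, ε_n)` is independent of `(C, X)`, conditioning on an event determined by
`(C, X)` does not change the law of `ε_i`, which by identical distribution is that of `ε_1`;
on `{V_i = v}` the outcome is `f_Y(v, ε_i)`, whence (i). For (ii), split
`E[f_Y(s_i(C, x*), ε_i)]` along the finitely many values `c` of `C`: on `{C = c}` the integrand
is `f_Y(s_i(c, x*), ε_i)`, and independence factors each piece as `m(s_i(c, x*)) · μ(C = c)`.
-/

namespace ProbabilityTheory

variable {Ω β γ : Type*} {mΩ : MeasurableSpace Ω} [MeasurableSpace β] [MeasurableSpace γ]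
  {μ : Measure Ω} {X : Ω → β} {Y : Ω → γ}

theorem IndepFun.setIntegral_preimage_eq_mul (hYX : IndepFun Y X μ) (hY : Measurable Y)
    (hX : AEMeasurable X μ) {g : β → ℝ} (hg : AEStronglyMeasurable g (μ.map X))
    {T : Set γ} (hT : MeasurableSet T) :
    ∫ ω in Y ⁻¹' T, g (X ω) ∂μ = μ.real (Y ⁻¹' T) * ∫ ω, g (X ω) ∂μ :=
  Indep.setIntegral_eq_mul hY.comap_le hYX hX ⟨T, hT, rfl⟩ hg

theorem IndepFun.integral_comp_cond_preimage [IsFiniteMeasure μ] (hYX : IndepFun Y X μ)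
    (hY : Measurable Y) (hX : AEMeasurable X μ) {g : β → ℝ}
    (hg : AEStronglyMeasurable g (μ.map X)) {T : Set γ} (hT : MeasurableSet T)
    (hμT : μ (Y ⁻¹' T) ≠ 0) :
    ∫ ω, g (X ω) ∂μ[|Y ⁻¹' T] = ∫ ω, g (X ω) ∂μ := by
  have hμT' : μ.real (Y ⁻¹' T) ≠ 0 :=
    (measureReal_ne_zero_iff (measure_ne_top μ _)).2 hμT
  rw [cond, integral_smul_measure, hYX.setIntegral_preimage_eq_mul hY hX hg hT,
    ENNReal.toReal_inv, ← measureReal_def, smul_eq_mul, inv_mul_cancel_left₀ hμT']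

theorem integral_eq_sum_setIntegral_preimage_singleton [Fintype γ]
    [MeasurableSingletonClass γ] (hY : Measurable Y) {f : Ω → ℝ} (hf : Integrable f μ) :
    ∫ ω, f ω ∂μ = ∑ y, ∫ ω in Y ⁻¹' {y}, f ω ∂μ := by
  rw [← integral_iUnion_fintype (fun y => hY (measurableSet_singleton y))
    (fun y y' hyy' => (Set.disjoint_singleton.2 hyy').preimage Y) (fun _ => hf.integrableOn),
    ← Set.preimage_iUnion, Set.iUnion_of_singleton, Set.preimage_univ, Measure.restrict_univ]

theorem IndepFun.integral_comp_prod_eq_sum [Fintype γ] [MeasurableSingletonClass γ]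
    (hYX : IndepFun Y X μ) (hY : Measurable Y) (hX : AEMeasurable X μ) {h : γ × β → ℝ}
    (hh : Measurable h) (hint : Integrable (fun ω => h (Y ω, X ω)) μ) :
    ∫ ω, h (Y ω, X ω) ∂μ = ∑ y, (∫ ω, h (y, X ω) ∂μ) * μ.real (Y ⁻¹' {y}) := by
  rw [integral_eq_sum_setIntegral_preimage_singleton hY hint]
  refine Finset.sum_congr rfl fun y _ => ?_
  have hfiber :
      ∫ ω in Y ⁻¹' {y}, h (Y ω, X ω) ∂μ = ∫ ω in Y ⁻¹' {y}, h (y, X ω) ∂μ :=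
    setIntegral_congr_fun (hY (measurableSet_singleton y)) fun ω (hω : Y ω = y) => by rw [hω]
  rw [hfiber, hYX.setIntegral_preimage_eq_mul hY hX (g := fun b => h (y, b))
    (hh.comp (measurable_const.prodMk measurable_id)).aestronglyMeasurable
    (measurableSet_singleton y), mul_comm]

end ProbabilityTheory

theorem stmt_13_general {Ω 𝒞 𝒳 𝒱 E : Type}
    [MeasurableSpace Ω]
    [Fintype 𝒞] [MeasurableSpace 𝒞] [MeasurableSingletonClass 𝒞]
    [Fintype 𝒳] [MeasurableSpace 𝒳] [MeasurableSingletonClass 𝒳]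
    [MeasurableSpace 𝒱]
    [MeasurableSpace E]
    (μ : Measure Ω) [IsProbabilityMeasure μ]
    (n : ℕ) (hn : 0 < n)
    (C : Ω → 𝒞) (hC : Measurable C)
    (X : Ω → 𝒳) (hX : Measurable X)
    (ε : Fin n → Ω → E) (hε : ∀ i, Measurable (ε i))
    (hident : ∀ i j, μ.map (ε i) = μ.map (ε j))
    (hindep : IndepFun (fun ω (i : Fin n) => ε i ω) (fun ω => (C ω, X ω)) μ)
    (fY : 𝒱 × E → ℝ) (hfY : Measurable fY)
    (B : ℝ) (hfYbdd : ∀ p, |fY p| ≤ B)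
    (s : Fin n → 𝒞 × 𝒳 → 𝒱) (xstar : 𝒳)
    (m : 𝒱 → ℝ) (hm : ∀ v, m v = ∫ ω, fY (v, ε ⟨0, hn⟩ ω) ∂μ) :
    (∀ i : Fin n, ∀ v : 𝒱, 0 < μ {ω | s i (C ω, X ω) = v} →
      ∫ ω, fY (s i (C ω, X ω), ε i ω) ∂(μ[|{ω | s i (C ω, X ω) = v}]) = m v) ∧
    (∫ ω, (1 / n : ℝ) * ∑ i, fY (s i (C ω, xstar), ε i ω) ∂μ =
      (1 / n : ℝ) * ∑ i, ∑ c : 𝒞, m (s i (c, xstar)) * (μ {ω | C ω = c}).toReal) := by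
  set εvec : Ω → Fin n → E := fun ω i => ε i ω
  have hεvec : Measurable εvec := measurable_pi_lambda _ hε
  have hCX : Measurable fun ω => (C ω, X ω) := hC.prodMk hX
  have hs : ∀ i, Measurable fun c => s i (c, xstar) := fun i => measurable_of_countable _
  have hmean : ∀ i v, ∫ ω, fY (v, ε i ω) ∂μ = m v := fun i v => by
    rw [hm]
    exact (IdentDistrib.comp ⟨(hε i).aemeasurable, (hε _).aemeasurable, hident i ⟨0, hn⟩⟩
      (hfY.comp (measurable_const.prodMk measurable_id))).integral_eq
  refine ⟨fun i v hpos => ?_, ?_⟩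
  · have hA : MeasurableSet {p : 𝒞 × 𝒳 | s i p = v} := (Set.toFinite _).measurableSet
    calc ∫ ω, fY (s i (C ω, X ω), ε i ω) ∂(μ[|{ω | s i (C ω, X ω) = v}])
        = ∫ ω, fY (v, εvec ω i) ∂(μ[|(fun ω => (C ω, X ω)) ⁻¹' {p | s i p = v}]) :=
          integral_congr_ae <| (ae_cond_mem (hCX hA)).mono
            fun ω (hω : s i (C ω, X ω) = v) => by simp only [εvec, hω]
      _ = m v := by
        rw [hindep.symm.integral_comp_cond_preimage (g := fun w => fY (v, w i)) hCX
          hεvec.aemeasurable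
          (hfY.comp (measurable_const.prodMk (measurable_pi_apply i))).aestronglyMeasurable
          hA hpos.ne', hmean]
  · have hint : ∀ i, Integrable (fun ω => fY (s i (C ω, xstar), ε i ω)) μ := fun i =>
      .of_bound (hfY.comp (((hs i).comp hC).prodMk (hε i))).aestronglyMeasurable B
        (ae_of_all _ fun _ => hfYbdd _)
    rw [integral_const_mul, integral_finsetSum _ fun i _ => hint i]
    congr 1
    refine Finset.sum_congr rfl fun i _ => ?_
    have hCε : IndepFun C εvec μ := (hindep.comp measurable_id measurable_fst).symm
    rw [hCε.integral_comp_prod_eq_sum hC hεvec.aemeasurable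
      (h := fun p => fY (s i (p.1, xstar), p.2 i))
      (hfY.comp (((hs i).comp measurable_fst).prodMk ((measurable_pi_apply i).comp measurable_snd)))
      (hint i)]
    simp only [εvec, hmean, measureReal_def]
    rfl

theorem stmt_13 {Ω 𝒞 𝒳 𝒱 E : Type}
    [MeasurableSpace Ω]
    [Fintype 𝒞] [MeasurableSpace 𝒞] [MeasurableSingletonClass 𝒞]
    [Fintype 𝒳] [MeasurableSpace 𝒳] [MeasurableSingletonClass 𝒳]
    [Fintype 𝒱] [MeasurableSpace 𝒱] [MeasurableSingletonClass 𝒱]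
    [MeasurableSpace E]
    (μ : Measure Ω) [IsProbabilityMeasure μ]
    (n : ℕ) (hn : 0 < n)
    (C : Ω → 𝒞) (hC : Measurable C)
    (X : Ω → 𝒳) (hX : Measurable X)
    (ε : Fin n → Ω → E) (hε : ∀ i, Measurable (ε i))
    (hident : ∀ i j, μ.map (ε i) = μ.map (ε j))
    (hindep : IndepFun (fun ω (i : Fin n) => ε i ω) (fun ω => (C ω, X ω)) μ)
    (fY : 𝒱 × E → ℝ) (hfY : Measurable fY)
    (B : ℝ) (hfYbdd : ∀ p, |fY p| ≤ B)
    (s : Fin n → 𝒞 × 𝒳 → 𝒱) (xstar : 𝒳)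
    (m : 𝒱 → ℝ) (hm : ∀ v, m v = ∫ ω, fY (v, ε ⟨0, hn⟩ ω) ∂μ) :
    (∀ i : Fin n, ∀ v : 𝒱, 0 < μ {ω | s i (C ω, X ω) = v} →
      ∫ ω, fY (s i (C ω, X ω), ε i ω) ∂(μ[|{ω | s i (C ω, X ω) = v}]) = m v) ∧
    (∫ ω, (1 / n : ℝ) * ∑ i, fY (s i (C ω, xstar), ε i ω) ∂μ =
      (1 / n : ℝ) * ∑ i, ∑ c : 𝒞, m (s i (c, xstar)) * (μ {ω | C ω = c}).toReal) :=
  stmt_13_general μ n hn C hC X hX ε hε hident hindep fY hfY B hfYbdd s xstar m hm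
end
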